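/- arXiv:math/0305359 — 2 statements merged into one kernel-verified Lean document; each statement's English description precedes it below -/
import Mathlib

section
/- The maximal deviation ‖·‖_v is a seminorm on the real vector space of bounded self-adjoint operators on a complex Hilbert space, and ‖T‖_v = 0 if and only if T is a real scalar multiple of the identity. -/
/-!
For a symmetric `T` and a unit vector `φ`, the variance is `‖Tφ - ⟪Tφ, φ⟫ φ‖²`, and the deviation
vector `Tφ - ⟪Tφ, φ⟫ φ` is additive in `T`; so `maxDev` is a supremum of seminorms
`T ↦ ‖Tφ - ⟪Tφ, φ⟫ φ‖`. If `maxDev T = 0`, every unit vector, hence every vector, is an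
eigenvector of `T` with a real eigenvalue, and an operator for which all vectors are eigenvectors
is a homothety.
-/

open scoped InnerProductSpace

variable {H : Type*} [NormedAddCommGroup H] [InnerProductSpace ℂ H] [CompleteSpace H]

/-- Variance of a bounded observable `T` at a vector `φ`. -/
noncomputable def observableVar (T : H →L[ℂ] H) (φ : H) : ℝ :=
  (⟪T (T φ), φ⟫_ℂ).re - ((⟪T φ, φ⟫_ℂ).re) ^ 2

/-- Maximal deviation of a bounded observable `T`. -/
noncomputable def maxDev (T : H →L[ℂ] H) : ℝ :=
  ⨆ φ : {x : H // ‖x‖ = 1}, Real.sqrt (observableVar T φ)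

section

variable {E : Type*} [NormedAddCommGroup E] [InnerProductSpace ℂ E]

noncomputable def deviation (T : E →L[ℂ] E) (φ : E) : E :=
  T φ - (⟪T φ, φ⟫_ℂ).re • φ

theorem observableVar_smul (c : ℝ) (T : E →L[ℂ] E) (φ : E) :
    observableVar (c • T) φ = c ^ 2 * observableVar T φ := by
  have happ (x : E) : (c • T) x = (c : ℂ) • T x := RCLike.real_smul_eq_coe_smul c (T x)
  simp only [observableVar, happ, map_smul, inner_smul_left, Complex.conj_ofReal,
    Complex.re_ofReal_mul]
  ring

theorem maxDev_smul (c : ℝ) (T : E →L[ℂ] E) : maxDev (c • T) = |c| * maxDev T := by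
  simp only [maxDev, Real.mul_iSup_of_nonneg (abs_nonneg c), observableVar_smul,
    Real.sqrt_mul (sq_nonneg c), Real.sqrt_sq_eq_abs]

theorem maxDev_one : maxDev (1 : E →L[ℂ] E) = 0 := by
  have hvar (φ : {x : E // ‖x‖ = 1}) : observableVar 1 (φ : E) = 0 := by
    simp [observableVar, inner_self_eq_norm_sq_to_K, φ.2]
  simp [maxDev, hvar]

theorem maxDev_nonneg (T : E →L[ℂ] E) : 0 ≤ maxDev T :=
  Real.iSup_nonneg fun _ ↦ Real.sqrt_nonneg _

theorem deviation_add (T S : E →L[ℂ] E) (φ : E) :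
    deviation (T + S) φ = deviation T φ + deviation S φ := by
  simp only [deviation, add_apply, inner_add_left, Complex.add_re, add_smul]
  abel

theorem norm_deviation_le (T : E →L[ℂ] E) {φ : E} (hφ : ‖φ‖ = 1) :
    ‖deviation T φ‖ ≤ 2 * ‖T‖ := by
  have hTφ : ‖T φ‖ ≤ ‖T‖ := by simpa [hφ] using T.le_opNorm φ
  have hmean : |(⟪T φ, φ⟫_ℂ).re| ≤ ‖T‖ :=
    calc |(⟪T φ, φ⟫_ℂ).re| ≤ ‖⟪T φ, φ⟫_ℂ‖ := Complex.abs_re_le_norm _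
      _ ≤ ‖T φ‖ * ‖φ‖ := norm_inner_le_norm _ _
      _ ≤ ‖T‖ := by rwa [hφ, mul_one]
  calc ‖deviation T φ‖ ≤ ‖T φ‖ + |(⟪T φ, φ⟫_ℂ).re| := by
        simpa [deviation, norm_smul, hφ] using norm_sub_le (T φ) ((⟪T φ, φ⟫_ℂ).re • φ)
    _ ≤ 2 * ‖T‖ := by linarith

theorem LinearMap.IsSymmetric.observableVar_eq_norm_deviation_sq {T : E →L[ℂ] E}
    (hT : (T : E →ₗ[ℂ] E).IsSymmetric) {φ : E} (hφ : ‖φ‖ = 1) :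
    observableVar T φ = ‖deviation T φ‖ ^ 2 := by
  have hTT : (⟪T (T φ), φ⟫_ℂ).re = ‖T φ‖ ^ 2 := by
    have hsym : ⟪T (T φ), φ⟫_ℂ = ⟪T φ, T φ⟫_ℂ := hT (T φ) φ
    rw [hsym, inner_self_eq_norm_sq_to_K]; norm_cast
  rw [observableVar, hTT, deviation, @norm_sub_sq ℂ, RCLike.real_smul_eq_coe_smul (K := ℂ),
    inner_smul_real_right, norm_smul, hφ]
  simp only [RCLike.re_to_complex, Complex.real_smul, Complex.re_ofReal_mul, RCLike.norm_ofReal,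
    sq_abs, mul_one]
  ring

theorem LinearMap.IsSymmetric.sqrt_observableVar_eq_norm_deviation {T : E →L[ℂ] E}
    (hT : (T : E →ₗ[ℂ] E).IsSymmetric) {φ : E} (hφ : ‖φ‖ = 1) :
    √(observableVar T φ) = ‖deviation T φ‖ := by
  rw [hT.observableVar_eq_norm_deviation_sq hφ, Real.sqrt_sq (norm_nonneg _)]

theorem LinearMap.IsSymmetric.norm_deviation_le_maxDev {T : E →L[ℂ] E}
    (hT : (T : E →ₗ[ℂ] E).IsSymmetric) {φ : E} (hφ : ‖φ‖ = 1) :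
    ‖deviation T φ‖ ≤ maxDev T := by
  have hbdd : BddAbove (Set.range fun ψ : {x : E // ‖x‖ = 1} ↦ √(observableVar T ψ)) := by
    refine ⟨2 * ‖T‖, Set.forall_mem_range.2 fun ψ ↦ ?_⟩
    rw [hT.sqrt_observableVar_eq_norm_deviation ψ.2]
    exact norm_deviation_le T ψ.2
  rw [← hT.sqrt_observableVar_eq_norm_deviation hφ]
  exact le_ciSup hbdd (⟨φ, hφ⟩ : {x : E // ‖x‖ = 1})

theorem maxDev_add_le {T S : E →L[ℂ] E} (hT : (T : E →ₗ[ℂ] E).IsSymmetric)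
    (hS : (S : E →ₗ[ℂ] E).IsSymmetric) : maxDev (T + S) ≤ maxDev T + maxDev S := by
  refine Real.iSup_le (fun φ ↦ ?_) (add_nonneg (maxDev_nonneg T) (maxDev_nonneg S))
  have hTS : ((T + S : E →L[ℂ] E) : E →ₗ[ℂ] E).IsSymmetric := hT.add hS
  calc √(observableVar (T + S) φ) = ‖deviation T φ + deviation S φ‖ := by
        rw [hTS.sqrt_observableVar_eq_norm_deviation φ.2, deviation_add]
    _ ≤ ‖deviation T φ‖ + ‖deviation S φ‖ := norm_add_le _ _
    _ ≤ maxDev T + maxDev S :=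
        add_le_add (hT.norm_deviation_le_maxDev φ.2) (hS.norm_deviation_le_maxDev φ.2)

theorem LinearMap.IsSymmetric.exists_apply_eq_smul_of_maxDev_eq_zero {T : E →L[ℂ] E}
    (hT : (T : E →ₗ[ℂ] E).IsSymmetric) (h0 : maxDev T = 0) (v : E) : ∃ r : ℝ, T v = r • v := by
  rcases eq_or_ne v 0 with rfl | hv
  · exact ⟨0, by simp⟩
  set φ := (‖v‖⁻¹ : ℝ) • v
  have hφ : ‖φ‖ = 1 := norm_smul_inv_norm hv
  have hdev : deviation T φ = 0 :=
    norm_le_zero_iff.1 (h0 ▸ hT.norm_deviation_le_maxDev hφ)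
  set r := (⟪T φ, φ⟫_ℂ).re
  have hTφ : T φ = r • φ := sub_eq_zero.1 hdev
  have hvφ : v = ‖v‖ • φ := (smul_inv_smul₀ (norm_ne_zero_iff.2 hv) v).symm
  refine ⟨r, ?_⟩
  rw [hvφ, T.map_smul_of_tower, hTφ, smul_comm]

theorem LinearMap.IsSymmetric.exists_eq_smul_one_of_maxDev_eq_zero {T : E →L[ℂ] E}
    (hT : (T : E →ₗ[ℂ] E).IsSymmetric) (h0 : maxDev T = 0) : ∃ c : ℝ, T = c • 1 := by
  -- Working over `ℝ` makes the ratio of the homothety real.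
  obtain ⟨c, hc⟩ := LinearMap.exists_eq_smul_id_of_forall_notLinearIndependent
    (f := (T.restrictScalars ℝ : E →ₗ[ℝ] E)) fun v ↦ by
      obtain ⟨r, hr⟩ := hT.exists_apply_eq_smul_of_maxDev_eq_zero h0 v
      rw [LinearIndependent.pair_iff]
      exact fun h ↦ by simpa using (h r (-1) (by simp [hr])).2
  exact ⟨c, ContinuousLinearMap.ext fun x ↦ by simpa using LinearMap.congr_fun hc x⟩

end

theorem maxDev_is_seminorm :
    (∀ T : H →L[ℂ] H, IsSelfAdjoint T → ∀ c : ℝ, maxDev (c • T) = |c| * maxDev T) ∧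
    (∀ T S : H →L[ℂ] H, IsSelfAdjoint T → IsSelfAdjoint S →
      maxDev (T + S) ≤ maxDev T + maxDev S) ∧
    (∀ T : H →L[ℂ] H, IsSelfAdjoint T →
      (maxDev T = 0 ↔ ∃ c : ℝ, T = c • (1 : H →L[ℂ] H))) :=
  ⟨fun T _ c ↦ maxDev_smul c T,
    fun _ _ hT hS ↦ maxDev_add_le hT.isSymmetric hS.isSymmetric,
    fun _ hT ↦ ⟨hT.isSymmetric.exists_eq_smul_one_of_maxDev_eq_zero,
      fun ⟨c, hc⟩ ↦ by rw [hc, maxDev_smul, maxDev_one, mul_zero]⟩⟩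
end

section
/- If P and Q are projections on a complex Hilbert space H with ‖P − Q‖ < 1 in the operator norm, then P and Q are unitarily equivalent. -/
/-!
For projections `p, q` the element `w = q p + (1 - q)(1 - p)` intertwines them, `w p = q w`, and
`w - 1 = (2q - 1)(p - q)` with `2q - 1` a self-adjoint unitary, so `‖w - 1‖ = ‖p - q‖ < 1` and `w`
is invertible. Taking adjoints gives `p w⋆ = w⋆ q`, hence `p` commutes with `w⋆ w` and therefore
with `|w| = √(w⋆ w)`. Writing `w = u |w|` (polar decomposition of an invertible element), the
unitary `u` still intertwines `p` and `q`, i.e. `q = u p u⋆`.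
-/

def intertwiner {R : Type*} [Ring R] (p q : R) : R := q * p + (1 - q) * (1 - p)

section Ring

variable {R : Type*} [Ring R] {p q : R}

theorem intertwiner_mul_eq_mul_intertwiner (hp : IsIdempotentElem p) (hq : IsIdempotentElem q) :
    intertwiner p q * p = q * intertwiner p q := by
  have hp' : (1 - p) * p = 0 := by rw [sub_mul, one_mul, hp.eq, sub_self]
  have hq' : q * (1 - q) = 0 := by rw [mul_sub, mul_one, hq.eq, sub_self]
  calc intertwiner p q * p = q * p := by
        rw [intertwiner, add_mul, mul_assoc, hp.eq, mul_assoc, hp', mul_zero, add_zero]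
    _ = q * intertwiner p q := by
        rw [intertwiner, mul_add, ← mul_assoc, hq.eq, ← mul_assoc, hq', zero_mul, add_zero]

theorem intertwiner_sub_one (hq : IsIdempotentElem q) :
    intertwiner p q - 1 = (2 * q - 1) * (p - q) := by
  have : (2 * q - 1) * (p - q) = 2 * (q * p) - (q * q + q * q) + q - p := by noncomm_ring
  rw [this, hq.eq, intertwiner]
  noncomm_ring

end Ring

section CStarRing

variable {R : Type*} [NormedRing R] [StarRing R] [CStarRing R] {p q : R}

theorem IsStarProjection.norm_intertwiner_sub_one (hq : IsStarProjection q) :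
    ‖intertwiner p q - 1‖ = ‖p - q‖ := by
  rw [intertwiner_sub_one hq.isIdempotentElem,
    CStarRing.norm_mem_unitary_mul _ hq.two_mul_sub_one_mem_unitary]

theorem IsStarProjection.isUnit_intertwiner [CompleteSpace R] (hq : IsStarProjection q)
    (h : ‖p - q‖ < 1) : IsUnit (intertwiner p q) := by
  rw [← sub_sub_cancel 1 (intertwiner p q)]
  apply isUnit_one_sub_of_norm_lt_one
  rwa [norm_sub_rev, hq.norm_intertwiner_sub_one]

end CStarRing

section CStarAlgebra

variable {A : Type*} [CStarAlgebra A] [PartialOrder A] [StarOrderedRing A]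

theorem CFC.isUnit_abs {a : A} (ha : IsUnit a) : IsUnit (abs a) :=
  (isUnit_sqrt_iff _ (star_mul_self_nonneg a)).mpr (ha.star.mul ha)

theorem CFC.exists_mem_unitary_mul_abs_eq {a : A} (ha : IsUnit a) :
    ∃ u ∈ unitary A, u * abs a = a := by
  obtain ⟨r, hr⟩ := isUnit_abs ha
  have hr_star : star (r : A) = r := by rw [hr]; exact (abs_nonneg a).isSelfAdjoint.star_eq
  have hrr : (r : A) * r = star a * a := by rw [hr, abs_mul_abs]
  refine ⟨a * ↑r⁻¹, (ha.mul r⁻¹.isUnit).mem_unitary_of_star_mul_self ?_, by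
    rw [← hr, Units.inv_mul_cancel_right]⟩
  apply r.isUnit.mul_left_cancel
  apply r.isUnit.mul_right_cancel
  calc ↑r * (star (a * ↑r⁻¹) * (a * ↑r⁻¹)) * ↑r
      = star (a * ↑r⁻¹ * ↑r) * (a * ↑r⁻¹ * ↑r) := by simp only [star_mul, hr_star, mul_assoc]
    _ = ↑r * 1 * ↑r := by rw [Units.inv_mul_cancel_right, mul_one, hrr]

theorem exists_mem_unitary_mul_eq_mul_of_isUnit {w p q : A} (hw : IsUnit w)
    (hp : IsSelfAdjoint p) (hq : IsSelfAdjoint q) (hwpq : w * p = q * w) :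
    ∃ u ∈ unitary A, u * p = q * u := by
  have hpw : p * star w = star w * q := by
    simpa only [star_mul, hp.star_eq, hq.star_eq] using congrArg star hwpq
  have hcomm : Commute (star w * w) p := by
    rw [Commute, SemiconjBy, mul_assoc, hwpq, ← mul_assoc, ← hpw, mul_assoc]
  have habs : Commute (CFC.abs w) p := hcomm.cfcₙ_nnreal _
  obtain ⟨u, hu, hwu⟩ := CFC.exists_mem_unitary_mul_abs_eq hw
  refine ⟨u, hu, (CFC.isUnit_abs hw).mul_right_cancel ?_⟩
  rw [mul_assoc, ← habs.eq, ← mul_assoc, hwu, hwpq, mul_assoc, hwu]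

theorem IsStarProjection.exists_mem_unitary_eq_mul_mul_star_of_norm_sub_lt_one {p q : A}
    (hp : IsStarProjection p) (hq : IsStarProjection q) (h : ‖p - q‖ < 1) :
    ∃ u ∈ unitary A, q = u * p * star u := by
  obtain ⟨u, hu, hupq⟩ := exists_mem_unitary_mul_eq_mul_of_isUnit (hq.isUnit_intertwiner h)
    hp.isSelfAdjoint hq.isSelfAdjoint
    (intertwiner_mul_eq_mul_intertwiner hp.isIdempotentElem hq.isIdempotentElem)
  refine ⟨u, hu, ?_⟩
  rw [hupq, mul_assoc, Unitary.mul_star_self_of_mem hu, mul_one]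

end CStarAlgebra

variable {H : Type*} [NormedAddCommGroup H] [InnerProductSpace ℂ H] [CompleteSpace H]

theorem projections_unitarily_equivalent_of_dist_lt_one
    (P Q : H →L[ℂ] H) (hP : IsSelfAdjoint P) (hP2 : IsIdempotentElem P)
    (hQ : IsSelfAdjoint Q) (hQ2 : IsIdempotentElem Q)
    (h : ‖P - Q‖ < 1) :
    ∃ U ∈ unitary (H →L[ℂ] H), Q = U * P * star U :=
  IsStarProjection.exists_mem_unitary_eq_mul_mul_star_of_norm_sub_lt_one ⟨hP2, hP⟩ ⟨hQ2, hQ⟩ h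
end
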